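/- arXiv:1310.1130 — 3 statements merged into one kernel-verified Lean document; each statement's English description precedes it below -/
import Mathlib

section
/- (Smoothing property of B_2) Let s > −1/2. Then for every t ∈ ℝ the bilinear operator B_2 maps Ḣ^s × Ḣ^s into Ḣ^{s+1} and satisfies ‖B_2(φ,ψ)‖_{Ḣ^{s+1}} ≤ C(s) ‖φ‖_{Ḣ^s} ‖ψ‖_{Ḣ^s}, with a constant C(s) independent of t. -/
open MeasureTheory Set

noncomputable section

/-- The weight `|k|^(2s)` appearing in the `Ḣ^s` norm. -/
def wt (s : ℝ) (k : ℤ) : ℝ := ((|k| : ℤ) : ℝ) ^ (2 * s)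

/-- Membership in the homogeneous Sobolev space `Ḣ^s` of sequences indexed by
nonzero integers. -/
def memH (s : ℝ) (u : ℤ → ℂ) : Prop :=
  Summable (fun k : {k : ℤ // k ≠ 0} => wt s k.1 * ‖u k.1‖ ^ 2)

/-- The `Ḣ^s` norm. -/
def hnorm (s : ℝ) (u : ℤ → ℂ) : ℝ :=
  Real.sqrt (∑' k : {k : ℤ // k ≠ 0}, wt s k.1 * ‖u k.1‖ ^ 2)

/-- The `(Ḣ^s)²` norm of a pair. -/
def hnorm2 (s : ℝ) (u v : ℤ → ℂ) : ℝ :=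
  Real.sqrt (hnorm s u ^ 2 + hnorm s v ^ 2)

/-- The conserved energy functional `𝓔(u,v) = 2‖u‖² + 2‖v‖² + ‖u-v‖²` (in `Ḣ^0`). -/
def energyE (u v : ℤ → ℂ) : ℝ :=
  2 * hnorm 0 u ^ 2 + 2 * hnorm 0 v ^ 2 + hnorm 0 (fun k => u k - v k) ^ 2

/-- Projection `𝒫` onto the low Fourier modes `|k| ≤ N`. -/
def Plow (N : ℕ) (u : ℤ → ℂ) : ℤ → ℂ := fun k => if |k| ≤ (N : ℤ) then u k else 0

/-- Projection `𝒬 = I - 𝒫` onto the high Fourier modes `|k| > N`. -/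
def Qhigh (N : ℕ) (u : ℤ → ℂ) : ℤ → ℂ := fun k => if |k| ≤ (N : ℤ) then 0 else u k

/-- The oscillating factor `e^{3 i k k₁ k₂ t}` with `k₂ = k - k₁`. -/
def osc2 (t : ℝ) (k k1 : ℤ) : ℂ :=
  Complex.exp (3 * Complex.I * (k : ℂ) * (k1 : ℂ) * ((k - k1 : ℤ) : ℂ) * (t : ℂ))

/-- The oscillating factor `e^{3 i (k₁+k₂)(k₂+k₃)(k₁+k₃) t}`. -/
def osc3 (t : ℝ) (k1 k2 k3 : ℤ) : ℂ :=
  Complex.exp (3 * Complex.I * ((k1 + k2 : ℤ) : ℂ) * ((k2 + k3 : ℤ) : ℂ) *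
    ((k1 + k3 : ℤ) : ℂ) * (t : ℂ))

/-- The bilinear operator `B₁` at time `t`. -/
def B1 (t : ℝ) (φ ψ : ℤ → ℂ) : ℤ → ℂ := fun k =>
  Complex.I * (k : ℂ) / 2 *
    ∑' k1 : ℤ, if k1 ≠ 0 ∧ k - k1 ≠ 0 then osc2 t k k1 * φ k1 * ψ (k - k1) else 0

/-- The bilinear operator `B₂` at time `t`. -/
def B2 (t : ℝ) (φ ψ : ℤ → ℂ) : ℤ → ℂ := fun k =>
  (1 / 6 : ℂ) *
    ∑' k1 : ℤ, if k1 ≠ 0 ∧ k - k1 ≠ 0 then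
      osc2 t k k1 * φ k1 * ψ (k - k1) / ((k1 : ℂ) * ((k - k1 : ℤ) : ℂ)) else 0

/-- The trilinear operator `R₃` at time `t`. -/
def R3 (t : ℝ) (φ ψ ξ : ℤ → ℂ) : ℤ → ℂ := fun k =>
  ∑' p : ℤ × ℤ,
    if p.1 ≠ 0 ∧ p.2 ≠ 0 ∧ k - p.1 - p.2 ≠ 0 then
      osc3 t p.1 p.2 (k - p.1 - p.2) * φ p.1 * ψ p.2 * ξ (k - p.1 - p.2) / (p.1 : ℂ)
    else 0

/-- The resonant part `R₃res` (sum over `(k₁+k₂)(k₂+k₃)(k₁+k₃) = 0`). -/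
def R3res (φ ψ ξ : ℤ → ℂ) : ℤ → ℂ := fun k =>
  ∑' p : ℤ × ℤ,
    if p.1 ≠ 0 ∧ p.2 ≠ 0 ∧ k - p.1 - p.2 ≠ 0 ∧
        (p.1 + p.2) * (p.2 + (k - p.1 - p.2)) * (p.1 + (k - p.1 - p.2)) = 0 then
      φ p.1 * ψ p.2 * ξ (k - p.1 - p.2) / (p.1 : ℂ)
    else 0

/-- The nonresonant part `R₃nres` (sum over `(k₁+k₂)(k₂+k₃)(k₁+k₃) ≠ 0`). -/
def R3nres (t : ℝ) (φ ψ ξ : ℤ → ℂ) : ℤ → ℂ := fun k =>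
  ∑' p : ℤ × ℤ,
    if p.1 ≠ 0 ∧ p.2 ≠ 0 ∧ k - p.1 - p.2 ≠ 0 ∧
        (p.1 + p.2) * (p.2 + (k - p.1 - p.2)) * (p.1 + (k - p.1 - p.2)) ≠ 0 then
      osc3 t p.1 p.2 (k - p.1 - p.2) * φ p.1 * ψ p.2 * ξ (k - p.1 - p.2) / (p.1 : ℂ)
    else 0

/-- The operator `R₃nres1(φ,ψ,ξ) = R₃nres(φ,𝒫ψ,ξ) + R₃nres(φ,𝒬ψ,𝒫ξ)`. -/
def R3nres1 (N : ℕ) (t : ℝ) (φ ψ ξ : ℤ → ℂ) : ℤ → ℂ := fun k =>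
  R3nres t φ (Plow N ψ) ξ k + R3nres t φ (Qhigh N ψ) (Plow N ξ) k

/-- The trilinear operator `B₃` (nonresonant indices). -/
def B3 (t : ℝ) (φ ψ ξ : ℤ → ℂ) : ℤ → ℂ := fun k =>
  ∑' p : ℤ × ℤ,
    if p.1 ≠ 0 ∧ p.2 ≠ 0 ∧ k - p.1 - p.2 ≠ 0 ∧
        (p.1 + p.2) * (p.2 + (k - p.1 - p.2)) * (p.1 + (k - p.1 - p.2)) ≠ 0 then
      osc3 t p.1 p.2 (k - p.1 - p.2) * φ p.1 * ψ p.2 * ξ (k - p.1 - p.2) /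
        ((p.1 : ℂ) * ((p.1 + p.2 : ℤ) : ℂ) * ((p.2 + (k - p.1 - p.2) : ℤ) : ℂ) *
          ((p.1 + (k - p.1 - p.2) : ℤ) : ℂ))
    else 0

/-- The operator `B₃₀(φ,ψ,ξ) = B₃(φ,𝒬ψ,𝒬ξ)`. -/
def B30 (N : ℕ) (t : ℝ) (φ ψ ξ : ℤ → ℂ) : ℤ → ℂ :=
  B3 t φ (Qhigh N ψ) (Qhigh N ξ)

/-- The phase `Φ(k₁,k₂,k₃,k₄) = (k₁+k₂+k₃+k₄)³ - k₁³ - k₂³ - k₃³ - k₄³`. -/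
def Phi4 (k1 k2 k3 k4 : ℤ) : ℤ :=
  (k1 + k2 + k3 + k4) ^ 3 - k1 ^ 3 - k2 ^ 3 - k3 ^ 3 - k4 ^ 3

/-- The oscillating factor `e^{i Φ(k₁,k₂,k₃,k₄) t}`. -/
def osc4 (t : ℝ) (k1 k2 k3 k4 : ℤ) : ℂ :=
  Complex.exp (Complex.I * ((Phi4 k1 k2 k3 k4 : ℤ) : ℂ) * (t : ℂ))

/-- The quadrilinear operator `B₄¹`. -/
def B41 (t : ℝ) (φ ψ ξ η : ℤ → ℂ) : ℤ → ℂ := fun k =>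
  ∑' q : ℤ × ℤ × ℤ,
    let k1 := q.1; let k2 := q.2.1; let k3 := q.2.2; let k4 := k - k1 - k2 - k3
    if k1 ≠ 0 ∧ k2 ≠ 0 ∧ k3 ≠ 0 ∧ k4 ≠ 0 ∧
        (k1 + k2) * (k1 + k3 + k4) * (k2 + k3 + k4) ≠ 0 then
      osc4 t k1 k2 k3 k4 * φ k1 * ψ k2 * ξ k3 * η k4 /
        (((k1 + k2 : ℤ) : ℂ) * ((k1 + k3 + k4 : ℤ) : ℂ) * ((k2 + k3 + k4 : ℤ) : ℂ))
    else 0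

/-- The quadrilinear operator `B₄²`. -/
def B42 (t : ℝ) (φ ψ ξ η : ℤ → ℂ) : ℤ → ℂ := fun k =>
  ∑' q : ℤ × ℤ × ℤ,
    let k1 := q.1; let k2 := q.2.1; let k3 := q.2.2; let k4 := k - k1 - k2 - k3
    if k1 ≠ 0 ∧ k2 ≠ 0 ∧ k3 ≠ 0 ∧ k4 ≠ 0 ∧
        (k1 + k2) * (k1 + k3 + k4) * (k2 + k3 + k4) ≠ 0 then
      osc4 t k1 k2 k3 k4 * ((k3 + k4 : ℤ) : ℂ) * φ k1 * ψ k2 * ξ k3 * η k4 /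
        ((k1 : ℂ) * ((k1 + k2 : ℤ) : ℂ) * ((k1 + k3 + k4 : ℤ) : ℂ) *
          ((k2 + k3 + k4 : ℤ) : ℂ))
    else 0

/-- The quadrilinear operator `B₄ = B₄¹ + B₄²`. -/
def B4 (t : ℝ) (φ ψ ξ η : ℤ → ℂ) : ℤ → ℂ := fun k =>
  B41 t φ ψ ξ η k + B42 t φ ψ ξ η k

/-- Right-hand side (before the `ik/2` factor and integration) of the `u`-equation
of the transformed Majda–Biello system. -/
def mbRHSu (u v : ℝ → ℤ → ℂ) (τ : ℝ) (k : ℤ) : ℂ :=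
  ∑' k1 : ℤ, if k1 ≠ 0 ∧ k - k1 ≠ 0 then
    osc2 τ k k1 * (u τ k1 * v τ (k - k1) - u τ k1 * u τ (k - k1)) else 0

/-- Right-hand side (before the `ik/2` factor and integration) of the `v`-equation
of the transformed Majda–Biello system. -/
def mbRHSv (u v : ℝ → ℤ → ℂ) (τ : ℝ) (k : ℤ) : ℂ :=
  ∑' k1 : ℤ, if k1 ≠ 0 ∧ k - k1 ≠ 0 then
    osc2 τ k k1 * (u τ k1 * v τ (k - k1) - v τ k1 * v τ (k - k1)) else 0

/-- `(u,v)` is a solution of the transformed Majda–Biello system on `[0,T]`: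
it belongs to `L^∞([0,T];(Ḣ^0)²)` and satisfies the integrated equations. -/
def IsMBSolution (T : ℝ) (u v : ℝ → ℤ → ℂ) : Prop :=
  (∃ M : ℝ, ∀ t ∈ Icc (0 : ℝ) T,
      memH 0 (u t) ∧ memH 0 (v t) ∧ hnorm2 0 (u t) (v t) ≤ M) ∧
  ∀ k : ℤ, k ≠ 0 → ∀ t ∈ Icc (0 : ℝ) T,
    (u t k - u 0 k = Complex.I * (k : ℂ) / 2 * (∫ τ in (0 : ℝ)..t, mbRHSu u v τ k)) ∧
    (v t k - v 0 k = Complex.I * (k : ℂ) / 2 * (∫ τ in (0 : ℝ)..t, mbRHSv u v τ k))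

/-- The (finite) right-hand side of the `u`-equation of the `N`-th Galerkin system. -/
def galRHSu (N : ℕ) (t : ℝ) (f g : ℤ → ℂ) (k : ℤ) : ℂ :=
  Complex.I * (k : ℂ) / 2 * ∑ k1 ∈ Finset.Icc (-(N : ℤ)) (N : ℤ),
    (if k1 ≠ 0 ∧ k - k1 ≠ 0 ∧ |k - k1| ≤ (N : ℤ) then
      osc2 t k k1 * (f k1 * g (k - k1) - f k1 * f (k - k1)) else 0)

/-- The (finite) right-hand side of the `v`-equation of the `N`-th Galerkin system. -/
def galRHSv (N : ℕ) (t : ℝ) (f g : ℤ → ℂ) (k : ℤ) : ℂ :=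
  Complex.I * (k : ℂ) / 2 * ∑ k1 ∈ Finset.Icc (-(N : ℤ)) (N : ℤ),
    (if k1 ≠ 0 ∧ k - k1 ≠ 0 ∧ |k - k1| ≤ (N : ℤ) then
      osc2 t k k1 * (f k1 * g (k - k1) - g k1 * g (k - k1)) else 0)

/-- `(u,v)` solves the `N`-th Galerkin system on the set `S` with initial data
`(uin, vin)`. -/
def IsGalerkinSolution (N : ℕ) (uin vin : ℤ → ℂ) (S : Set ℝ) (u v : ℝ → ℤ → ℂ) : Prop :=
  (∀ k : ℤ, k ≠ 0 → u 0 k = uin k ∧ v 0 k = vin k) ∧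
  ∀ t ∈ S, ∀ k : ℤ, k ≠ 0 →
    HasDerivWithinAt (fun τ : ℝ => u τ k)
      (if |k| ≤ (N : ℤ) then galRHSu N t (u t) (v t) k else 0) S t ∧
    HasDerivWithinAt (fun τ : ℝ => v τ k)
      (if |k| ≤ (N : ℤ) then galRHSv N t (u t) (v t) k else 0) S t


lemma tsum_cauchy_schwarz {f g : ℤ → ℝ} (hf0 : ∀ i, 0 ≤ f i) (hg0 : ∀ i, 0 ≤ g i)
    (hf : Summable (fun i => f i ^ 2)) (hg : Summable (fun i => g i ^ 2)) :
    Summable (fun i => f i * g i) ∧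
      ∑' i, f i * g i ≤ Real.sqrt (∑' i, f i ^ 2) * Real.sqrt (∑' i, g i ^ 2) := by
  have hsum : Summable fun i => f i * g i := by
    refine Summable.of_nonneg_of_le (fun i => mul_nonneg (hf0 i) (hg0 i)) (fun i => ?_)
      ((hf.add hg).mul_left (1/2))
    have := sq_nonneg (f i - g i); nlinarith
  refine ⟨hsum, Summable.tsum_le_of_sum_le hsum fun S => ?_⟩
  have h1 : (∑ i ∈ S, f i * g i)^2 ≤ (∑ i ∈ S, f i^2) * (∑ i ∈ S, g i^2) :=
    Finset.sum_mul_sq_le_sq_mul_sq S f g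
  have h2 : (∑ i ∈ S, f i^2) ≤ ∑' i, f i^2 := Summable.sum_le_tsum S (fun i _ => sq_nonneg _) hf
  have h3 : (∑ i ∈ S, g i^2) ≤ ∑' i, g i^2 := Summable.sum_le_tsum S (fun i _ => sq_nonneg _) hg
  have h0 : 0 ≤ ∑ i ∈ S, f i * g i := Finset.sum_nonneg fun i _ => mul_nonneg (hf0 i) (hg0 i)
  calc ∑ i ∈ S, f i * g i = Real.sqrt ((∑ i ∈ S, f i * g i)^2) := (Real.sqrt_sq h0).symm
    _ ≤ Real.sqrt ((∑' i, f i^2) * (∑' i, g i^2)) := Real.sqrt_le_sqrt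
        (h1.trans (mul_le_mul h2 h3 (Finset.sum_nonneg fun i _ => sq_nonneg _)
          (tsum_nonneg fun i => sq_nonneg _)))
    _ = _ := Real.sqrt_mul (tsum_nonneg fun _ => sq_nonneg _) _


lemma rpow_two_mul {x : ℝ} (hx : 0 ≤ x) (p : ℝ) : (x ^ p) ^ 2 = x ^ (2 * p) := by
  rw [← Real.rpow_natCast (x ^ p) 2, ← Real.rpow_mul hx, mul_comm]
  norm_num

/-- summand weight `|j|^{-σ}` for `j ≠ 0`. -/
def ew (σ : ℝ) : ℤ → ℝ := fun j => if j = 0 then 0 else ((|j| : ℤ) : ℝ) ^ (-σ)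

lemma ew_nonneg (σ : ℝ) (j : ℤ) : 0 ≤ ew σ j := by
  unfold ew; split
  · exact le_refl _
  · exact Real.rpow_nonneg (by positivity) _

lemma ew_summable {σ : ℝ} (hσ : 1 < σ) : Summable (ew σ) := by
  have hnat : Summable (fun n : ℕ => ((n:ℝ) ^ σ)⁻¹) := Real.summable_nat_rpow_inv.2 hσ
  have heq : ∀ n : ℕ, ew σ (n : ℤ) = ((n:ℝ) ^ σ)⁻¹ := by
    intro n
    rcases eq_or_ne n 0 with rfl | hn
    · simp [ew, Real.zero_rpow (by linarith : σ ≠ 0)]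
    · rw [show ew σ (n:ℤ) = ((|(n:ℤ)| : ℤ) : ℝ) ^ (-σ) from if_neg (by exact_mod_cast hn),
        Real.rpow_neg (by positivity)]
      norm_num
  refine Summable.of_nat_of_neg (hnat.congr fun n => (heq n).symm) ?_
  have h2 : ∀ n : ℕ, ew σ (-(n : ℤ)) = ew σ (n : ℤ) := by intro n; simp [ew]
  exact hnat.congr fun n => ((h2 n).trans (heq n)).symm

lemma kernel_bound {σ : ℝ} (hσ : 0 ≤ σ) {k k1 : ℤ} (h1 : k1 ≠ 0) (h2 : k - k1 ≠ 0) :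
    ((|k| : ℤ) : ℝ) ^ σ / (((|k1| : ℤ) : ℝ) ^ σ * ((|k - k1| : ℤ) : ℝ) ^ σ)
      ≤ 2 ^ σ * (ew σ k1 + ew σ (k - k1)) := by
  have hx1 : (1:ℝ) ≤ ((|k1| : ℤ) : ℝ) := by exact_mod_cast Int.one_le_abs h1
  have hy1 : (1:ℝ) ≤ ((|k - k1| : ℤ) : ℝ) := by exact_mod_cast Int.one_le_abs h2
  have hk : ((|k| : ℤ) : ℝ) ≤ ((|k1| : ℤ) : ℝ) + ((|k - k1| : ℤ) : ℝ) := by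
    have h : |k| ≤ |k1| + |k - k1| := by
      calc |k| = |k1 + (k - k1)| := by ring_nf
        _ ≤ |k1| + |k - k1| := abs_add_le _ _
    exact_mod_cast h
  set x : ℝ := ((|k1| : ℤ) : ℝ)
  set y : ℝ := ((|k - k1| : ℤ) : ℝ)
  have hx0 : 0 < x := by linarith
  have hy0 : 0 < y := by linarith
  have hk0 : (0:ℝ) ≤ ((|k| : ℤ) : ℝ) := by positivity
  have hxσ : 0 < x ^ σ := Real.rpow_pos_of_pos hx0 σ
  have hyσ : 0 < y ^ σ := Real.rpow_pos_of_pos hy0 σ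
  have hew1 : ew σ k1 = (x ^ σ)⁻¹ := by
    rw [show ew σ k1 = x ^ (-σ) from if_neg h1, Real.rpow_neg hx0.le]
  have hew2 : ew σ (k - k1) = (y ^ σ)⁻¹ := by
    rw [show ew σ (k - k1) = y ^ (-σ) from if_neg h2, Real.rpow_neg hy0.le]
  have h2σ : (0:ℝ) ≤ 2 ^ σ := Real.rpow_nonneg (by norm_num) _
  rcases le_total x y with hxy | hxy
  · have hnum : ((|k| : ℤ) : ℝ) ^ σ ≤ 2 ^ σ * y ^ σ := by
      rw [← Real.mul_rpow (by norm_num) hy0.le]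
      exact Real.rpow_le_rpow hk0 (by linarith) hσ
    calc ((|k| : ℤ) : ℝ) ^ σ / (x ^ σ * y ^ σ) ≤ (2 ^ σ * y ^ σ) / (x ^ σ * y ^ σ) := by
          gcongr
      _ = 2 ^ σ * (x ^ σ)⁻¹ := by field_simp
      _ ≤ 2 ^ σ * (ew σ k1 + ew σ (k - k1)) := by
          rw [hew1, hew2]; nlinarith [inv_nonneg.2 hyσ.le]
  · have hnum : ((|k| : ℤ) : ℝ) ^ σ ≤ 2 ^ σ * x ^ σ := by
      rw [← Real.mul_rpow (by norm_num) hx0.le]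
      exact Real.rpow_le_rpow hk0 (by linarith) hσ
    calc ((|k| : ℤ) : ℝ) ^ σ / (x ^ σ * y ^ σ) ≤ (2 ^ σ * x ^ σ) / (x ^ σ * y ^ σ) := by
          gcongr
      _ = 2 ^ σ * (y ^ σ)⁻¹ := by field_simp
      _ ≤ 2 ^ σ * (ew σ k1 + ew σ (k - k1)) := by
          rw [hew1, hew2]; nlinarith [inv_nonneg.2 hxσ.le]

lemma osc2_norm (t : ℝ) (k k1 : ℤ) : ‖osc2 t k k1‖ = 1 := by
  have h : osc2 t k k1 = Complex.exp (((3 * (k:ℝ) * (k1:ℝ) * ((k:ℝ) - (k1:ℝ)) * t : ℝ)) * Complex.I) := by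
    unfold osc2; congr 1; push_cast; ring
  rw [h, Complex.norm_exp_ofReal_mul_I]

def aseq (s : ℝ) (φ : ℤ → ℂ) : ℤ → ℝ :=
  fun j => if j = 0 then 0 else ((|j| : ℤ) : ℝ) ^ s * ‖φ j‖

lemma aseq_nonneg (s : ℝ) (φ : ℤ → ℂ) (j : ℤ) : 0 ≤ aseq s φ j := by
  unfold aseq; split
  · exact le_refl _
  · positivity

lemma aseq_sq (s : ℝ) (φ : ℤ → ℂ) {j : ℤ} (hj : j ≠ 0) :
    aseq s φ j ^ 2 = wt s j * ‖φ j‖ ^ 2 := by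
  have hx : (0:ℝ) < ((|j| : ℤ) : ℝ) := by
    have := abs_pos.mpr hj; exact_mod_cast this
  rw [show aseq s φ j = ((|j| : ℤ) : ℝ) ^ s * ‖φ j‖ from if_neg hj, mul_pow,
    rpow_two_mul hx.le, wt]

lemma aseq_sq_eq_indicator (s : ℝ) (φ : ℤ → ℂ) :
    (fun j : ℤ => aseq s φ j ^ 2) =
      Set.indicator {j : ℤ | j ≠ 0} (fun j => wt s j * ‖φ j‖ ^ 2) := by
  funext j
  rcases eq_or_ne j 0 with rfl | hj
  · simp [aseq]
  · rw [aseq_sq s φ hj, Set.indicator_of_mem (by exact hj)]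

lemma aseq_summable {s : ℝ} {φ : ℤ → ℂ} (h : memH s φ) :
    Summable (fun j : ℤ => aseq s φ j ^ 2) := by
  rw [aseq_sq_eq_indicator]
  exact (summable_subtype_iff_indicator
    (s := {j : ℤ | j ≠ 0}) (f := fun j => wt s j * ‖φ j‖ ^ 2)).1 h

lemma aseq_tsum (s : ℝ) (φ : ℤ → ℂ) :
    ∑' j : ℤ, aseq s φ j ^ 2 = ∑' k : {k : ℤ // k ≠ 0}, wt s k.1 * ‖φ k.1‖ ^ 2 := by
  rw [aseq_sq_eq_indicator]
  exact (tsum_subtype {j : ℤ | j ≠ 0} (fun j => wt s j * ‖φ j‖ ^ 2)).symm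

lemma hnorm_sq (s : ℝ) (φ : ℤ → ℂ) : hnorm s φ ^ 2 = ∑' j : ℤ, aseq s φ j ^ 2 := by
  rw [hnorm, Real.sq_sqrt, aseq_tsum]
  refine tsum_nonneg fun k => mul_nonneg ?_ (sq_nonneg _)
  exact Real.rpow_nonneg (by positivity) _

lemma b2_key (s : ℝ) (hs : -(1 / 2) < s) (t : ℝ) (φ ψ : ℤ → ℂ)
    (hφ : memH s φ) (hψ : memH s ψ) (k : ℤ) (hk : k ≠ 0) :
    wt (s + 1) k * ‖B2 t φ ψ k‖ ^ 2 ≤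
      2 ^ (2 * s + 2) * (2 * ∑' j : ℤ, ew (2 * s + 2) j) / 36 *
        ∑' k1 : ℤ, aseq s φ k1 ^ 2 * aseq s ψ (k - k1) ^ 2 := by
  have hσ1 : 1 < 2 * s + 2 := by linarith
  have hσ0 : (0:ℝ) ≤ 2 * s + 2 := by linarith
  set a : ℤ → ℝ := aseq s φ with ha
  set b : ℤ → ℝ := aseq s ψ with hb
  have ha2 : Summable (fun j : ℤ => a j ^ 2) := aseq_summable hφ
  have hb2 : Summable (fun j : ℤ => b j ^ 2) := aseq_summable hψ
  set Z : ℝ := ∑' j : ℤ, ew (2 * s + 2) j with hZ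
  have heS : Summable (ew (2 * s + 2)) := ew_summable hσ1
  have hZ0 : 0 ≤ Z := tsum_nonneg fun j => ew_nonneg _ _
  set A : ℝ := 2 ^ (2 * s + 2) * (2 * Z) with hA
  have h2σnn : (0:ℝ) ≤ 2 ^ (2 * s + 2) := Real.rpow_nonneg (by norm_num) _
  have hA0 : 0 ≤ A := by rw [hA]; positivity
  -- kernel function
  set x : ℤ → ℝ := fun j => ((|j| : ℤ) : ℝ) with hx
  have hxpos : ∀ j : ℤ, j ≠ 0 → 0 < x j := by
    intro j hj
    show (0:ℝ) < ((|j| : ℤ) : ℝ)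
    exact_mod_cast abs_pos.mpr hj
  have hxk : 0 < x k := hxpos k hk
  set K : ℝ := x k ^ (s + 1) with hK
  have hK0 : 0 < K := Real.rpow_pos_of_pos hxk _
  set m : ℤ → ℝ := fun k1 =>
    if k1 ≠ 0 ∧ k - k1 ≠ 0 then K / (x k1 ^ (s + 1) * x (k - k1) ^ (s + 1)) else 0 with hm
  have hm0 : ∀ k1, 0 ≤ m k1 := by
    intro k1; rw [hm]; dsimp only; split
    · rename_i h
      have h1 : 0 < x k1 := hxpos _ h.1
      have h2 : 0 < x (k - k1) := hxpos _ h.2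
      positivity
    · exact le_refl _
  set g : ℤ → ℝ := fun k1 => a k1 * b (k - k1) with hg
  have hg0 : ∀ k1, 0 ≤ g k1 := fun k1 => mul_nonneg (aseq_nonneg _ _ _) (aseq_nonneg _ _ _)
  -- summability of shifted ew
  have hshift : Summable (fun k1 : ℤ => ew (2 * s + 2) (k - k1)) := by
    have := (Equiv.subLeft k).summable_iff (f := ew (2 * s + 2))
    exact this.2 heS
  -- m² bounds
  have hm2 : ∀ k1, m k1 ^ 2 ≤ 2 ^ (2 * s + 2) * (ew (2 * s + 2) k1 + ew (2 * s + 2) (k - k1)) := by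
    intro k1
    rw [hm]; dsimp only; split
    · rename_i h
      have h1 : 0 < x k1 := hxpos _ h.1
      have h2 : 0 < x (k - k1) := hxpos _ h.2
      have hsq : (K / (x k1 ^ (s + 1) * x (k - k1) ^ (s + 1))) ^ 2
          = x k ^ (2 * (s + 1)) / (x k1 ^ (2 * (s + 1)) * x (k - k1) ^ (2 * (s + 1))) := by
        rw [div_pow, mul_pow, hK, rpow_two_mul hxk.le, rpow_two_mul h1.le, rpow_two_mul h2.le]
      rw [hsq]
      have := kernel_bound (k := k) (k1 := k1) hσ0 h.1 h.2
      calc x k ^ (2 * (s + 1)) / (x k1 ^ (2 * (s + 1)) * x (k - k1) ^ (2 * (s + 1)))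
          = ((|k| : ℤ) : ℝ) ^ (2 * s + 2) /
            (((|k1| : ℤ) : ℝ) ^ (2 * s + 2) * ((|k - k1| : ℤ) : ℝ) ^ (2 * s + 2)) := by
            rw [hx]; ring_nf
        _ ≤ _ := this
    · simpa using mul_nonneg h2σnn (add_nonneg (ew_nonneg _ _) (ew_nonneg _ _))
  have hm2sum : Summable (fun k1 => m k1 ^ 2) := by
    refine Summable.of_nonneg_of_le (fun k1 => sq_nonneg _) hm2 ?_
    exact (heS.add hshift).mul_left _
  have hm2tsum : ∑' k1, m k1 ^ 2 ≤ A := by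
    calc ∑' k1, m k1 ^ 2
        ≤ ∑' k1, 2 ^ (2 * s + 2) * (ew (2 * s + 2) k1 + ew (2 * s + 2) (k - k1)) :=
          Summable.tsum_le_tsum hm2 hm2sum ((heS.add hshift).mul_left _)
      _ = A := by
          rw [tsum_mul_left, Summable.tsum_add heS hshift, hA]
          have : ∑' k1 : ℤ, ew (2 * s + 2) (k - k1) = Z := by
            rw [hZ]; exact (Equiv.subLeft k).tsum_eq (ew (2 * s + 2))
          rw [this, hZ]; ring
  -- g² summable, with tsum = H k
  have hgsq : ∀ k1, g k1 ^ 2 = a k1 ^ 2 * b (k - k1) ^ 2 := fun k1 => mul_pow _ _ _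
  have hg2sum : Summable (fun k1 => g k1 ^ 2) := by
    refine Summable.of_nonneg_of_le (fun k1 => sq_nonneg _) (fun k1 => ?_)
      (ha2.mul_left (∑' j : ℤ, b j ^ 2))
    rw [hgsq]
    have hble : b (k - k1) ^ 2 ≤ ∑' j : ℤ, b j ^ 2 :=
      Summable.le_tsum hb2 _ fun j _ => sq_nonneg _
    have : a k1 ^ 2 * b (k - k1) ^ 2 ≤ a k1 ^ 2 * ∑' j : ℤ, b j ^ 2 :=
      mul_le_mul_of_nonneg_left hble (sq_nonneg _)
    linarith [this]
  obtain ⟨hmg_sum, hCS⟩ := tsum_cauchy_schwarz hm0 hg0 hm2sum hg2sum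
  -- pointwise identity
  set cf : ℤ → ℂ := fun k1 => if k1 ≠ 0 ∧ k - k1 ≠ 0 then
      osc2 t k k1 * φ k1 * ψ (k - k1) / ((k1 : ℂ) * ((k - k1 : ℤ) : ℂ)) else 0 with hcf
  have hnc : ∀ k1, ‖cf k1‖ =
      (if k1 ≠ 0 ∧ k - k1 ≠ 0 then ‖φ k1‖ * ‖ψ (k - k1)‖ / (x k1 * x (k - k1)) else 0) := by
    intro k1
    rw [hcf]; dsimp only; split
    · rename_i h
      rw [norm_div, norm_mul, norm_mul, osc2_norm, one_mul, norm_mul,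
        Complex.norm_intCast, Complex.norm_intCast, hx]
      push_cast
      ring
    · simp
  have hid : ∀ k1, K * ‖cf k1‖ = m k1 * g k1 := by
    intro k1
    rw [hnc, hm, hg]; dsimp only
    split
    · rename_i h
      have h1 : 0 < x k1 := hxpos _ h.1
      have h2 : 0 < x (k - k1) := hxpos _ h.2
      have e1 : x k1 ^ (s + 1) = x k1 ^ s * x k1 := by
        rw [Real.rpow_add_one h1.ne']
      have e2 : x (k - k1) ^ (s + 1) = x (k - k1) ^ s * x (k - k1) := by
        rw [Real.rpow_add_one h2.ne']
      have ha1 : a k1 = x k1 ^ s * ‖φ k1‖ := by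
        rw [ha, aseq, if_neg h.1, hx]
      have hb1 : b (k - k1) = x (k - k1) ^ s * ‖ψ (k - k1)‖ := by
        rw [hb, aseq, if_neg h.2, hx]
      rw [e1, e2, ha1, hb1]
      have hx1s : (0:ℝ) < x k1 ^ s := Real.rpow_pos_of_pos h1 _
      have hx2s : (0:ℝ) < x (k - k1) ^ s := Real.rpow_pos_of_pos h2 _
      field_simp
    · rename_i h
      simp
  -- summability of ‖cf‖ and bound
  have hcfnorm_sum : Summable (fun k1 => ‖cf k1‖) := by
    have : Summable (fun k1 => (m k1 * g k1) / K) := hmg_sum.div_const K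
    refine this.congr fun k1 => ?_
    rw [← hid]; field_simp
  have hcf_sum : Summable cf := hcfnorm_sum.of_norm
  have hB2 : ‖B2 t φ ψ k‖ = (1/6 : ℝ) * ‖∑' k1, cf k1‖ := by
    have hb : B2 t φ ψ k = (1/6 : ℂ) * ∑' k1, cf k1 := rfl
    rw [hb, norm_mul]
    congr 1
    simp
  have hbound : K * ‖B2 t φ ψ k‖ ≤ (1/6 : ℝ) * ∑' k1, m k1 * g k1 := by
    rw [hB2]
    have h1 : ‖∑' k1, cf k1‖ ≤ ∑' k1, ‖cf k1‖ := norm_tsum_le_tsum_norm hcfnorm_sum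
    have h2 : K * ∑' k1, ‖cf k1‖ = ∑' k1, m k1 * g k1 := by
      rw [← tsum_mul_left]
      exact tsum_congr hid
    calc K * ((1/6 : ℝ) * ‖∑' k1, cf k1‖)
        = (1/6 : ℝ) * (K * ‖∑' k1, cf k1‖) := by ring
      _ ≤ (1/6 : ℝ) * (K * ∑' k1, ‖cf k1‖) := by gcongr
      _ = (1/6 : ℝ) * ∑' k1, m k1 * g k1 := by rw [h2]
  -- Cauchy–Schwarz and final squaring
  have hHk0 : 0 ≤ ∑' k1, g k1 ^ 2 := tsum_nonneg fun k1 => sq_nonneg _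
  have hfinal : K * ‖B2 t φ ψ k‖ ≤
      (1/6 : ℝ) * (Real.sqrt A * Real.sqrt (∑' k1, g k1 ^ 2)) := by
    refine hbound.trans ?_
    apply mul_le_mul_of_nonneg_left _ (by norm_num : (0:ℝ) ≤ 1/6)
    refine hCS.trans ?_
    apply mul_le_mul_of_nonneg_right _ (Real.sqrt_nonneg _)
    exact Real.sqrt_le_sqrt hm2tsum
  have hKsq : K ^ 2 = wt (s + 1) k := by
    rw [hK, rpow_two_mul hxk.le, wt, hx]
  have hlhs0 : 0 ≤ K * ‖B2 t φ ψ k‖ := mul_nonneg hK0.le (norm_nonneg _)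
  have hsq := mul_self_le_mul_self hlhs0 hfinal
  calc wt (s + 1) k * ‖B2 t φ ψ k‖ ^ 2 = (K * ‖B2 t φ ψ k‖) * (K * ‖B2 t φ ψ k‖) := by
        rw [← hKsq]; ring
    _ ≤ ((1/6 : ℝ) * (Real.sqrt A * Real.sqrt (∑' k1, g k1 ^ 2))) *
        ((1/6 : ℝ) * (Real.sqrt A * Real.sqrt (∑' k1, g k1 ^ 2))) := hsq
    _ = (1/36 : ℝ) * ((Real.sqrt A * Real.sqrt A) * (Real.sqrt (∑' k1, g k1 ^ 2) *
        Real.sqrt (∑' k1, g k1 ^ 2))) := by ring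
    _ = A / 36 * ∑' k1, g k1 ^ 2 := by
        rw [Real.mul_self_sqrt hA0, Real.mul_self_sqrt hHk0]; ring
    _ = 2 ^ (2 * s + 2) * (2 * Z) / 36 * ∑' k1 : ℤ, a k1 ^ 2 * b (k - k1) ^ 2 := by
        rw [hA]; congr 1
        exact tsum_congr hgsq


lemma wt_nonneg (s : ℝ) (k : ℤ) : 0 ≤ wt s k := Real.rpow_nonneg (by positivity) _

set_option maxHeartbeats 2000000 in
/-- Smoothing property of `B₂`. -/
theorem b2_smoothing (s : ℝ) (hs : -(1 / 2) < s) :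
    ∃ C : ℝ, ∀ t : ℝ, ∀ φ ψ : ℤ → ℂ, memH s φ → memH s ψ →
      memH (s + 1) (B2 t φ ψ) ∧
      hnorm (s + 1) (B2 t φ ψ) ≤ C * hnorm s φ * hnorm s ψ := by
  set Z : ℝ := ∑' j : ℤ, ew (2 * s + 2) j with hZ
  have hZ0 : 0 ≤ Z := tsum_nonneg fun j => ew_nonneg _ _
  set A : ℝ := 2 ^ (2 * s + 2) * (2 * Z) with hA
  have h2σnn : (0:ℝ) ≤ 2 ^ (2 * s + 2) := Real.rpow_nonneg (by norm_num) _
  have hA0 : 0 ≤ A := by rw [hA]; positivity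
  refine ⟨Real.sqrt (A / 36), ?_⟩
  intro t φ ψ hφ hψ
  set a : ℤ → ℝ := aseq s φ with ha
  set b : ℤ → ℝ := aseq s ψ with hb
  have ha2 : Summable (fun j : ℤ => a j ^ 2) := aseq_summable hφ
  have hb2 : Summable (fun j : ℤ => b j ^ 2) := aseq_summable hψ
  -- double sum machinery
  have hF : Summable (fun p : ℤ × ℤ => a p.1 ^ 2 * b p.2 ^ 2) :=
    ha2.mul_of_nonneg hb2 (fun i => sq_nonneg _) (fun i => sq_nonneg _)
  set E : ℤ × ℤ ≃ ℤ × ℤ :=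
    { toFun := fun p => (p.2, p.1 - p.2)
      invFun := fun q => (q.1 + q.2, q.1)
      left_inv := by rintro ⟨u, w⟩; simp
      right_inv := by rintro ⟨u, w⟩; simp } with hE
  have hF' : Summable (fun p : ℤ × ℤ => a p.2 ^ 2 * b (p.1 - p.2) ^ 2) := by
    have h := (E.summable_iff (f := fun p : ℤ × ℤ => a p.1 ^ 2 * b p.2 ^ 2)).2 hF
    exact h.congr fun p => rfl
  set H : ℤ → ℝ := fun k => ∑' k1 : ℤ, a k1 ^ 2 * b (k - k1) ^ 2 with hH
  have hHsummable : Summable H := by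
    have h := hF'.prod
    exact h.congr fun k => rfl
  have hH0 : ∀ k, 0 ≤ H k :=
    fun k => tsum_nonneg fun _ => mul_nonneg (sq_nonneg _) (sq_nonneg _)
  have hHtsum : ∑' k : ℤ, H k = (∑' j : ℤ, a j ^ 2) * (∑' j : ℤ, b j ^ 2) := by
    have e1 : ∑' k : ℤ, H k = ∑' p : ℤ × ℤ, a p.2 ^ 2 * b (p.1 - p.2) ^ 2 :=
      (Summable.tsum_prod hF').symm
    have e2 : ∑' p : ℤ × ℤ, a p.2 ^ 2 * b (p.1 - p.2) ^ 2
        = ∑' p : ℤ × ℤ, a p.1 ^ 2 * b p.2 ^ 2 := by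
      have := E.tsum_eq (f := fun p : ℤ × ℤ => a p.1 ^ 2 * b p.2 ^ 2)
      exact this
    have e3 : ∑' p : ℤ × ℤ, a p.1 ^ 2 * b p.2 ^ 2
        = (∑' j : ℤ, a j ^ 2) * (∑' j : ℤ, b j ^ 2) := by
      rw [Summable.tsum_prod hF]
      calc ∑' k : ℤ, ∑' k1 : ℤ, a k ^ 2 * b k1 ^ 2
          = ∑' k : ℤ, a k ^ 2 * ∑' k1 : ℤ, b k1 ^ 2 := by
            exact tsum_congr fun k => tsum_mul_left
        _ = _ := tsum_mul_right
    rw [e1, e2, e3]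
  -- key pointwise bound
  have key : ∀ k : ℤ, k ≠ 0 → wt (s + 1) k * ‖B2 t φ ψ k‖ ^ 2 ≤ A / 36 * H k :=
    fun k hk => b2_key s hs t φ ψ hφ hψ k hk
  have hcmp : Summable (fun k : {k : ℤ // k ≠ 0} => A / 36 * H k.1) :=
    (hHsummable.mul_left (A / 36)).subtype _
  have hmem : memH (s + 1) (B2 t φ ψ) := by
    refine Summable.of_nonneg_of_le
      (fun k => mul_nonneg (wt_nonneg _ _) (sq_nonneg _)) (fun k => key k.1 k.2) hcmp
  refine ⟨hmem, ?_⟩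
  -- norm estimate
  have hsub : ∑' k : {k : ℤ // k ≠ 0}, H k.1 ≤ ∑' k : ℤ, H k := by
    have h1 : ∑' k : {k : ℤ // k ≠ 0}, H k.1 = ∑' k : ℤ, Set.indicator {k : ℤ | k ≠ 0} H k :=
      tsum_subtype {k : ℤ | k ≠ 0} H
    rw [h1]
    exact Summable.tsum_le_tsum (fun k => Set.indicator_le_self' (fun j _ => hH0 j) k)
      (hHsummable.indicator _) hHsummable
  have hT : ∑' k : {k : ℤ // k ≠ 0}, wt (s + 1) k.1 * ‖B2 t φ ψ k.1‖ ^ 2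
      ≤ A / 36 * ((∑' j : ℤ, a j ^ 2) * (∑' j : ℤ, b j ^ 2)) := by
    calc ∑' k : {k : ℤ // k ≠ 0}, wt (s + 1) k.1 * ‖B2 t φ ψ k.1‖ ^ 2
        ≤ ∑' k : {k : ℤ // k ≠ 0}, A / 36 * H k.1 :=
          Summable.tsum_le_tsum (fun k => key k.1 k.2) hmem hcmp
      _ = A / 36 * ∑' k : {k : ℤ // k ≠ 0}, H k.1 := tsum_mul_left
      _ ≤ A / 36 * ∑' k : ℤ, H k := by
          exact mul_le_mul_of_nonneg_left hsub (by positivity)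
      _ = A / 36 * ((∑' j : ℤ, a j ^ 2) * (∑' j : ℤ, b j ^ 2)) := by rw [hHtsum]
  have hXa : ∑' j : ℤ, a j ^ 2 = hnorm s φ ^ 2 := (hnorm_sq s φ).symm
  have hXb : ∑' j : ℤ, b j ^ 2 = hnorm s ψ ^ 2 := (hnorm_sq s ψ).symm
  have hφ0 : 0 ≤ hnorm s φ := Real.sqrt_nonneg _
  have hψ0 : 0 ≤ hnorm s ψ := Real.sqrt_nonneg _
  calc hnorm (s + 1) (B2 t φ ψ)
      ≤ Real.sqrt (A / 36 * ((∑' j : ℤ, a j ^ 2) * (∑' j : ℤ, b j ^ 2))) :=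
        Real.sqrt_le_sqrt hT
    _ = Real.sqrt (A / 36) * hnorm s φ * hnorm s ψ := by
        rw [hXa, hXb, Real.sqrt_mul (by positivity), Real.sqrt_mul (by positivity),
          Real.sqrt_sq hφ0, Real.sqrt_sq hψ0, mul_assoc]
end
end

section
/- (Fractional smoothing property of B_2) Let s and α be real numbers with s + α ≥ 0, α < 3/4, and s > −3/4. Then for every t ∈ ℝ the bilinear operator B_2 maps Ḣ^s × Ḣ^s into Ḣ^{s+α} and satisfies ‖B_2(φ,ψ)‖_{Ḣ^{s+α}} ≤ C(s,α) ‖φ‖_{Ḣ^s} ‖ψ‖_{Ḣ^s}, with a constant C(s,α) independent of t. -/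
open MeasureTheory Set

noncomputable section

/-!
With `a j = |j|^s ‖φ j‖` and `b j = |j|^s ‖ψ j‖`, the oscillating factor has modulus one, so
`|k|^(s+α) ‖B₂(φ,ψ) k‖ ≤ (1/6) ∑ⱼ m_k(j) a j b (k-j)` with the multiplier
`m_k(j) = |k|^(s+α) |j|^(-1-s) |k-j|^(-1-s)`, uniformly in `t`. Since `|k| ≤ 2 |j| |k-j|` and
`s + α ≥ 0`, `m_k(j)² ≤ 2^(2(s+α)) (|j| |k-j|)^(2α-2) ≤ 2^(2(s+α)) (|j|^(4α-4) + |k-j|^(4α-4)) / 2`,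
whose sum over `j` is bounded independently of `k` because `4α - 4 < -1`. Cauchy–Schwarz in `j`
gives `|k|^(2(s+α)) ‖B₂(φ,ψ) k‖² ≤ C² ∑ⱼ (a j)² (b (k-j))²`, and summing this convolution over `k`
gives `C² ‖φ‖² ‖ψ‖²`.
-/

theorem add_rpow_mul_rpow_mul_rpow_le {x y σ r : ℝ} (hx : 1 ≤ x) (hy : 1 ≤ y) (hσ : 0 ≤ σ) :
    (x + y) ^ σ * x ^ r * y ^ r ≤ 2 ^ σ * (x * y) ^ (σ + r) := by
  have hx0 : 0 < x := one_pos.trans_le hx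
  have hy0 : 0 < y := one_pos.trans_le hy
  have hsum : x + y ≤ 2 * (x * y) := by nlinarith
  calc (x + y) ^ σ * x ^ r * y ^ r
      ≤ (2 * (x * y)) ^ σ * (x * y) ^ r := by
        rw [mul_assoc, ← Real.mul_rpow hx0.le hy0.le]
        gcongr
    _ = 2 ^ σ * (x * y) ^ (σ + r) := by
        rw [Real.mul_rpow zero_le_two (by positivity), Real.rpow_add (by positivity), mul_assoc]

theorem sq_mul_rpow_le_add_div_two {x y : ℝ} (hx : 0 ≤ x) (hy : 0 ≤ y) (c : ℝ) :
    ((x * y) ^ c) ^ 2 ≤ (x ^ (4 * c) + y ^ (4 * c)) / 2 := by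
  have hsq : ∀ {z : ℝ}, 0 ≤ z → z ^ (4 * c) = (z ^ (2 * c)) ^ 2 := fun hz => by
    rw [← Real.rpow_mul_natCast hz]; ring_nf
  rw [Real.mul_rpow hx hy, mul_pow, ← Real.rpow_mul_natCast hx, ← Real.rpow_mul_natCast hy,
    hsq hx, hsq hy]
  push_cast
  rw [mul_comm c 2]
  nlinarith [sq_nonneg (x ^ (2 * c) - y ^ (2 * c))]

theorem tsum_mul_sq_le_sq_mul_sq {ι : Type*} {f g : ι → ℝ} (hf0 : 0 ≤ f) (hg0 : 0 ≤ g)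
    (hf : Summable fun i => f i ^ 2) (hg : Summable fun i => g i ^ 2) :
    Summable (fun i => f i * g i) ∧
      (∑' i, f i * g i) ^ 2 ≤ (∑' i, f i ^ 2) * ∑' i, g i ^ 2 := by
  simp only [← Real.rpow_two] at hf hg ⊢
  obtain ⟨hfg, hle⟩ := Real.summable_and_inner_le_Lp_mul_Lq_tsum_of_nonneg
    Real.HolderConjugate.two_two hf0 hg0 hf hg
  refine ⟨hfg, ?_⟩
  have hF : 0 ≤ ∑' i, f i ^ (2 : ℝ) := tsum_nonneg fun i => Real.rpow_nonneg (hf0 i) _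
  have hG : 0 ≤ ∑' i, g i ^ (2 : ℝ) := tsum_nonneg fun i => Real.rpow_nonneg (hg0 i) _
  calc (∑' i, f i * g i) ^ (2 : ℝ)
      ≤ ((∑' i, f i ^ (2 : ℝ)) ^ (1 / 2 : ℝ) * (∑' i, g i ^ (2 : ℝ)) ^ (1 / 2 : ℝ)) ^ (2 : ℝ) := by
        gcongr
        exact tsum_nonneg fun i => mul_nonneg (hf0 i) (hg0 i)
    _ = (∑' i, f i ^ (2 : ℝ)) * ∑' i, g i ^ (2 : ℝ) := by
        rw [Real.mul_rpow (by positivity) (by positivity), ← Real.rpow_mul hF,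
          ← Real.rpow_mul hG]
        norm_num

section Convolution

variable {G : Type*} [AddCommGroup G] {a b : G → ℝ} {A B : ℝ}

theorem hasSum_mul_sub_prod (ha0 : 0 ≤ a) (hb0 : 0 ≤ b) (ha : HasSum a A) (hb : HasSum b B) :
    HasSum (fun p : G × G => a p.2 * b (p.1 - p.2)) (A * B) := by
  -- `e (k, j) = (j, k - j)`
  let e : G × G ≃ G × G := (Equiv.prodComm G G).trans ((Equiv.refl G).prodShear Equiv.subRight)
  have hprod : HasSum (fun p : G × G => a p.1 * b p.2) (A * B) :=
    ha.mul hb (ha.summable.mul_of_nonneg hb.summable ha0 hb0)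
  exact e.hasSum_iff.mpr hprod

theorem summable_mul_sub (ha0 : 0 ≤ a) (hb0 : 0 ≤ b) (ha : Summable a) (hb : Summable b)
    (k : G) : Summable fun j => a j * b (k - j) :=
  (hasSum_mul_sub_prod ha0 hb0 ha.hasSum hb.hasSum).summable.prod_factor k

theorem hasSum_tsum_mul_sub (ha0 : 0 ≤ a) (hb0 : 0 ≤ b) (ha : HasSum a A) (hb : HasSum b B) :
    HasSum (fun k => ∑' j, a j * b (k - j)) (A * B) :=
  (hasSum_mul_sub_prod ha0 hb0 ha hb).prod_fiberwise fun k =>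
    (summable_mul_sub ha0 hb0 ha.summable hb.summable k).hasSum

end Convolution

theorem one_le_abs_intCast {j : ℤ} (hj : j ≠ 0) : (1 : ℝ) ≤ |(j : ℝ)| := by
  rw [← Int.cast_abs]; exact_mod_cast Int.one_le_abs hj

/-- `|j| ^ r` on the nonzero integers, extended by zero (not by `0 ^ r`) at `j = 0`. -/
def absRpow (r : ℝ) (j : ℤ) : ℝ := if j = 0 then 0 else |(j : ℝ)| ^ r

theorem absRpow_nonneg (r : ℝ) (j : ℤ) : 0 ≤ absRpow r j := by
  unfold absRpow; split_ifs <;> positivity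

theorem absRpow_of_ne_zero (r : ℝ) {j : ℤ} (hj : j ≠ 0) : absRpow r j = |(j : ℝ)| ^ r :=
  if_neg hj

theorem absRpow_mul_absRpow (r r' : ℝ) (j : ℤ) :
    absRpow r j * absRpow r' j = absRpow (r + r') j := by
  unfold absRpow
  split_ifs with hj
  · simp
  · rw [Real.rpow_add (abs_pos.mpr (Int.cast_ne_zero.mpr hj))]

theorem wt_eq_sq (σ : ℝ) (k : ℤ) : wt σ k = (|(k : ℝ)| ^ σ) ^ 2 := by
  rw [wt, Int.cast_abs, ← Real.rpow_mul_natCast (abs_nonneg _), mul_comm]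
  norm_num

def weightedAbs (s : ℝ) (u : ℤ → ℂ) (j : ℤ) : ℝ := absRpow s j * ‖u j‖

theorem weightedAbs_nonneg (s : ℝ) (u : ℤ → ℂ) (j : ℤ) : 0 ≤ weightedAbs s u j :=
  mul_nonneg (absRpow_nonneg s j) (norm_nonneg _)

theorem hasSum_sq_weightedAbs {s : ℝ} {u : ℤ → ℂ} (hu : memH s u) :
    HasSum (fun j => weightedAbs s u j ^ 2) (hnorm s u ^ 2) := by
  have hnonneg : 0 ≤ ∑' k : {k : ℤ // k ≠ 0}, wt s k.1 * ‖u k.1‖ ^ 2 :=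
    tsum_nonneg fun k => mul_nonneg (by rw [wt]; positivity) (sq_nonneg _)
  rw [hnorm, Real.sq_sqrt hnonneg]
  convert (hasSum_subtype_iff_indicator (s := {k : ℤ | k ≠ 0})
    (f := fun k => wt s k * ‖u k‖ ^ 2)).mp hu.hasSum using 1
  ext j
  by_cases hj : j = 0
  · simp [weightedAbs, absRpow, hj]
  · rw [Set.indicator_of_mem hj, weightedAbs, absRpow_of_ne_zero s hj, mul_pow, wt_eq_sq s j]

def multiplier (σ r : ℝ) (k j : ℤ) : ℝ := |(k : ℝ)| ^ σ * (absRpow r j * absRpow r (k - j))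

section Multiplier

variable {σ r : ℝ}

theorem sq_multiplier_le (hσ : 0 ≤ σ) (k j : ℤ) :
    multiplier σ r k j ^ 2 ≤
      2 ^ (2 * σ) * ((|(j : ℝ)| ^ (4 * (σ + r)) + |((k - j : ℤ) : ℝ)| ^ (4 * (σ + r))) / 2) := by
  by_cases hj : j = 0 ∨ k - j = 0
  · rcases hj with hj | hj <;> simp [multiplier, absRpow, hj] <;> positivity
  obtain ⟨hj, hkj⟩ := not_or.mp hj
  rw [multiplier, absRpow_of_ne_zero r hj, absRpow_of_ne_zero r hkj]
  set x := |(j : ℝ)|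
  set y := |((k - j : ℤ) : ℝ)|
  have hx : 1 ≤ x := one_le_abs_intCast hj
  have hy : 1 ≤ y := one_le_abs_intCast hkj
  have hk : |(k : ℝ)| ≤ x + y := by
    simpa [x, y] using abs_add_le (j : ℝ) ((k - j : ℤ) : ℝ)
  have hbound : |(k : ℝ)| ^ σ * (x ^ r * y ^ r) ≤ 2 ^ σ * (x * y) ^ (σ + r) := by
    calc |(k : ℝ)| ^ σ * (x ^ r * y ^ r) ≤ (x + y) ^ σ * x ^ r * y ^ r := by
          rw [← mul_assoc]; gcongr
      _ ≤ 2 ^ σ * (x * y) ^ (σ + r) := add_rpow_mul_rpow_mul_rpow_le hx hy hσ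
  calc (|(k : ℝ)| ^ σ * (x ^ r * y ^ r)) ^ 2 ≤ (2 ^ σ * (x * y) ^ (σ + r)) ^ 2 := by
        gcongr
    _ = 2 ^ (2 * σ) * ((x * y) ^ (σ + r)) ^ 2 := by
        rw [mul_pow, ← Real.rpow_mul_natCast zero_le_two]; push_cast; ring_nf
    _ ≤ 2 ^ (2 * σ) * ((x ^ (4 * (σ + r)) + y ^ (4 * (σ + r))) / 2) := by
        gcongr
        exact sq_mul_rpow_le_add_div_two (by positivity) (by positivity) _

theorem summable_and_tsum_sq_multiplier_le (hσ : 0 ≤ σ) (hc : 4 * (σ + r) < -1) (k : ℤ) :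
    Summable (fun j => multiplier σ r k j ^ 2) ∧
      ∑' j, multiplier σ r k j ^ 2 ≤
        2 ^ (2 * σ) * ∑' n : ℤ, |(n : ℝ)| ^ (4 * (σ + r)) := by
  set v : ℤ → ℝ := fun n => |(n : ℝ)| ^ (4 * (σ + r))
  have hv : Summable v := by
    simpa using Real.summable_abs_int_rpow (b := -(4 * (σ + r))) (by linarith)
  have hv' : Summable fun j => v (k - j) := (Equiv.subLeft k).summable_iff.mpr hv
  have hmaj : HasSum (fun j => 2 ^ (2 * σ) * ((v j + v (k - j)) / 2))
      (2 ^ (2 * σ) * ∑' n, v n) := by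
    have h : HasSum (fun j => v j + v (k - j)) (∑' n, v n + ∑' n, v n) := by
      refine hv.hasSum.add ?_
      rw [← (Equiv.subLeft k).tsum_eq v]
      exact hv'.hasSum
    rw [← add_self_div_two (∑' n, v n)]
    exact (h.div_const 2).mul_left _
  have hle := sq_multiplier_le (r := r) hσ k
  have hsum := Summable.of_nonneg_of_le (fun j => sq_nonneg _) hle hmaj.summable
  exact ⟨hsum, hmaj.tsum_eq ▸ hsum.tsum_le_tsum hle hmaj.summable⟩

end Multiplier

theorem norm_osc2 (t : ℝ) (k j : ℤ) : ‖osc2 t k j‖ = 1 := by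
  rw [osc2, ← Complex.norm_exp_ofReal_mul_I (3 * k * j * (k - j) * t)]
  push_cast
  ring_nf

theorem norm_B2_summand (t : ℝ) (φ ψ : ℤ → ℂ) (k j : ℤ) :
    ‖if j ≠ 0 ∧ k - j ≠ 0 then
        osc2 t k j * φ j * ψ (k - j) / ((j : ℂ) * ((k - j : ℤ) : ℂ)) else 0‖ =
      absRpow (-1) j * absRpow (-1) (k - j) * (‖φ j‖ * ‖ψ (k - j)‖) := by
  split_ifs with h
  · obtain ⟨hj, hkj⟩ := h
    rw [absRpow_of_ne_zero _ hj, absRpow_of_ne_zero _ hkj, Real.rpow_neg_one, Real.rpow_neg_one,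
      norm_div, norm_mul, norm_mul, norm_mul, norm_osc2, Complex.norm_intCast,
      Complex.norm_intCast]
    field_simp
  · rcases not_and_or.mp h with hj | hkj
    · simp [absRpow, not_not.mp hj]
    · simp [absRpow, not_not.mp hkj]

section B2Estimate

variable {s σ : ℝ} {φ ψ : ℤ → ℂ} {k : ℤ}

theorem rpow_mul_norm_B2_le (hσ : 0 ≤ σ) (hk : k ≠ 0) (t : ℝ)
    (hsum : Summable fun j =>
      multiplier σ (-(1 + s)) k j * (weightedAbs s φ j * weightedAbs s ψ (k - j))) :
    |(k : ℝ)| ^ σ * ‖B2 t φ ψ k‖ ≤ 1 / 6 * ∑' j,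
      multiplier σ (-(1 + s)) k j * (weightedAbs s φ j * weightedAbs s ψ (k - j)) := by
  set m₀ : ℤ → ℝ := fun j => absRpow (-(1 + s)) j * absRpow (-(1 + s)) (k - j)
  set g : ℤ → ℝ := fun j => weightedAbs s φ j * weightedAbs s ψ (k - j)
  have hweight : 1 ≤ |(k : ℝ)| ^ σ := Real.one_le_rpow (one_le_abs_intCast hk) hσ
  have hsummand : ∀ j, ‖if j ≠ 0 ∧ k - j ≠ 0 then
      osc2 t k j * φ j * ψ (k - j) / ((j : ℂ) * ((k - j : ℤ) : ℂ)) else 0‖ = m₀ j * g j := by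
    intro j
    have hexp : -(1 + s) + s = -1 := by ring
    rw [norm_B2_summand, ← hexp, ← absRpow_mul_absRpow, ← absRpow_mul_absRpow]
    simp only [m₀, g, weightedAbs]
    ring
  have hm₀g0 : ∀ j, 0 ≤ m₀ j * g j := fun j =>
    mul_nonneg (mul_nonneg (absRpow_nonneg _ _) (absRpow_nonneg _ _))
      (mul_nonneg (weightedAbs_nonneg _ _ _) (weightedAbs_nonneg _ _ _))
  have hm₀g : Summable fun j => m₀ j * g j :=
    hsum.of_nonneg_of_le hm₀g0 fun j =>
      (le_mul_of_one_le_left (hm₀g0 j) hweight).trans_eq (mul_assoc _ _ _).symm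
  calc |(k : ℝ)| ^ σ * ‖B2 t φ ψ k‖
      ≤ |(k : ℝ)| ^ σ * (1 / 6 * ∑' j, m₀ j * g j) := by
        rw [B2, norm_mul]
        gcongr
        · norm_num
        · rw [← tsum_congr hsummand]
          exact norm_tsum_le_tsum_norm (hm₀g.congr fun j => (hsummand j).symm)
    _ = 1 / 6 * ∑' j, multiplier σ (-(1 + s)) k j * g j := by
        simp only [multiplier, m₀, mul_assoc, tsum_mul_left]
        ring

def b2SmoothingConst (s α : ℝ) : ℝ :=
  √(2 ^ (2 * (s + α)) * ∑' n : ℤ, |(n : ℝ)| ^ (4 * α - 4)) / 6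

theorem wt_mul_sq_norm_B2_le {α : ℝ} (hσ : 0 ≤ s + α) (hα : α < 3 / 4) (hk : k ≠ 0) (t : ℝ)
    (hfib : Summable fun j => weightedAbs s φ j ^ 2 * weightedAbs s ψ (k - j) ^ 2) :
    wt (s + α) k * ‖B2 t φ ψ k‖ ^ 2 ≤
      b2SmoothingConst s α ^ 2 * ∑' j, weightedAbs s φ j ^ 2 * weightedAbs s ψ (k - j) ^ 2 := by
  set m : ℤ → ℝ := multiplier (s + α) (-(1 + s)) k
  set g : ℤ → ℝ := fun j => weightedAbs s φ j * weightedAbs s ψ (k - j)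
  set M := 2 ^ (2 * (s + α)) * ∑' n : ℤ, |(n : ℝ)| ^ (4 * α - 4)
  have hM : 0 ≤ M := mul_nonneg (by positivity) (tsum_nonneg fun n => by positivity)
  have hexp : 4 * (s + α + -(1 + s)) = 4 * α - 4 := by ring
  obtain ⟨hm, hmM⟩ := summable_and_tsum_sq_multiplier_le (r := -(1 + s)) hσ (by linarith) k
  rw [hexp] at hmM
  have hg : Summable fun j => g j ^ 2 := by simpa only [g, mul_pow] using hfib
  obtain ⟨hmg, hcs⟩ := tsum_mul_sq_le_sq_mul_sq
    (fun j => mul_nonneg (by positivity) (mul_nonneg (absRpow_nonneg _ _) (absRpow_nonneg _ _)))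
    (fun j => mul_nonneg (weightedAbs_nonneg _ _ _) (weightedAbs_nonneg _ _ _)) hm hg
  calc wt (s + α) k * ‖B2 t φ ψ k‖ ^ 2 = (|(k : ℝ)| ^ (s + α) * ‖B2 t φ ψ k‖) ^ 2 := by
        rw [wt_eq_sq]; ring
    _ ≤ (1 / 6 * ∑' j, m j * g j) ^ 2 :=
        pow_le_pow_left₀ (by positivity) (rpow_mul_norm_B2_le hσ hk t hmg) 2
    _ ≤ 1 / 36 * ((∑' j, m j ^ 2) * ∑' j, g j ^ 2) := by
        rw [mul_pow]; norm_num; exact hcs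
    _ ≤ 1 / 36 * (M * ∑' j, g j ^ 2) := by gcongr
    _ = b2SmoothingConst s α ^ 2 * ∑' j, weightedAbs s φ j ^ 2 * weightedAbs s ψ (k - j) ^ 2 := by
        rw [b2SmoothingConst, div_pow, Real.sq_sqrt hM]
        simp only [g, mul_pow]
        ring

end B2Estimate

theorem b2_fractional_smoothing_general (s α : ℝ) (h1 : 0 ≤ s + α) (h2 : α < 3 / 4) :
    ∃ C : ℝ, ∀ t : ℝ, ∀ φ ψ : ℤ → ℂ, memH s φ → memH s ψ →
      memH (s + α) (B2 t φ ψ) ∧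
      hnorm (s + α) (B2 t φ ψ) ≤ C * hnorm s φ * hnorm s ψ := by
  refine ⟨b2SmoothingConst s α, fun t φ ψ hφ hψ => ?_⟩
  have ha0 : 0 ≤ fun j => weightedAbs s φ j ^ 2 := fun j => sq_nonneg _
  have hb0 : 0 ≤ fun j => weightedAbs s ψ j ^ 2 := fun j => sq_nonneg _
  have ha := hasSum_sq_weightedAbs hφ
  have hb := hasSum_sq_weightedAbs hψ
  have hmaj := (hasSum_tsum_mul_sub ha0 hb0 ha hb).mul_left (b2SmoothingConst s α ^ 2)
  have hpoint (k : {k : ℤ // k ≠ 0}) := wt_mul_sq_norm_B2_le h1 h2 k.2 t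
    (summable_mul_sub ha0 hb0 ha.summable hb.summable k)
  have hmem : memH (s + α) (B2 t φ ψ) :=
    (hmaj.summable.subtype _).of_nonneg_of_le (fun k => by rw [wt_eq_sq]; positivity) hpoint
  refine ⟨hmem, ?_⟩
  have hle := (hmem.tsum_le_tsum hpoint (hmaj.summable.subtype _)).trans
    (hmaj.summable.tsum_subtype_le _ _ fun k => mul_nonneg (sq_nonneg _)
      (tsum_nonneg fun j => mul_nonneg (ha0 j) (hb0 _)))
  rw [hmaj.tsum_eq] at hle
  calc hnorm (s + α) (B2 t φ ψ)
      ≤ √(b2SmoothingConst s α ^ 2 * (hnorm s φ ^ 2 * hnorm s ψ ^ 2)) := Real.sqrt_le_sqrt hle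
    _ = b2SmoothingConst s α * hnorm s φ * hnorm s ψ := by
        rw [← mul_pow, ← mul_pow, Real.sqrt_sq (by unfold b2SmoothingConst hnorm; positivity),
          mul_assoc]

/-- Fractional smoothing property of `B₂`. -/
theorem b2_fractional_smoothing (s α : ℝ) (h1 : 0 ≤ s + α) (h2 : α < 3 / 4)
    (h3 : -(3 / 4) < s) :
    ∃ C : ℝ, ∀ t : ℝ, ∀ φ ψ : ℤ → ℂ, memH s φ → memH s ψ →
      memH (s + α) (B2 t φ ψ) ∧
      hnorm (s + α) (B2 t φ ψ) ≤ C * hnorm s φ * hnorm s ψ :=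
  b2_fractional_smoothing_general s α h1 h2
end
end

section
/- (Smoothing property of B_3) Let s ≥ 0. Then for every t ∈ ℝ the trilinear operator B_3 maps (Ḣ^s)³ into Ḣ^{s+2} and satisfies ‖B_3(φ,ψ,ξ)‖_{Ḣ^{s+2}} ≤ C(s) ‖φ‖_{Ḣ^s} ‖ψ‖_{Ḣ^s} ‖ξ‖_{Ḣ^s}, with a constant C(s) independent of t. -/
open MeasureTheory Set

noncomputable section

/-!
Since `|k| ≤ 3 |k₁| |k₂| |k₃|` for nonzero integers, `|k|^(s+2) |B₃(φ,ψ,ξ)_k|` is at most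
`3^s ∑ a_k(k₁,k₂) F(k₁) G(k₂) H(k₃)` with `F = |·|^s |φ|` (and likewise `G`, `H`) and
`a_k = k² / |k₁ (k₁+k₂) (k-k₁) (k-k₂)|`. Cauchy–Schwarz in `(k₁,k₂)` followed by the sum over `k`
reduces the theorem to a bound on `∑_{k₁,k₂} a_k²` uniform in `k`. With `A = k₁`, `B = k₁+k₂`,
`C = k-k₁`, `D = k-k₂`, the relations `k = A + C`, `k = B + D - A`, `2k = B + C + D` and
`(x₁ + ⋯ + x_m)² ≤ m (x₁² + ⋯ + x_m²)` bound `a_k²` by six terms `1/(X² Y²)`, where `(X, Y)` is an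
injective affine image of `(k₁, k₂)`; each sums to at most `(∑_{n ≠ 0} 1/n²)² = (π²/3)²`.
-/

open scoped ENNReal
open Function

namespace ENNReal

theorem tsum_mul_sq_le {ι : Type*} (f g : ι → ℝ≥0∞) :
    (∑' i, f i * g i) ^ 2 ≤ (∑' i, f i ^ 2) * ∑' i, g i ^ 2 := by
  have holder : ∑' i, f i * g i ≤
      (∑' i, f i ^ (2 : ℝ)) ^ (1 / 2 : ℝ) * (∑' i, g i ^ (2 : ℝ)) ^ (1 / 2 : ℝ) := by
    rw [ENNReal.tsum_eq_iSup_sum]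
    refine iSup_le fun s => (inner_le_Lp_mul_Lq s f g .two_two).trans ?_
    gcongr <;> exact ENNReal.sum_le_tsum s
  calc (∑' i, f i * g i) ^ 2
      ≤ ((∑' i, f i ^ (2 : ℝ)) ^ (1 / 2 : ℝ) * (∑' i, g i ^ (2 : ℝ)) ^ (1 / 2 : ℝ)) ^ 2 := by
        gcongr
    _ = (∑' i, f i ^ 2) * ∑' i, g i ^ 2 := by
        simp only [mul_pow, ← ENNReal.rpow_natCast, ← ENNReal.rpow_mul]
        norm_num

theorem tsum_prod_mul {β γ : Type*} (f : β → ℝ≥0∞) (g : γ → ℝ≥0∞) :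
    ∑' x : β × γ, f x.1 * g x.2 = (∑' b, f b) * ∑' c, g c := by
  rw [ENNReal.tsum_prod', ← ENNReal.tsum_mul_right]
  simp only [ENNReal.tsum_mul_left]

theorem tsum_mul_comp_le_of_injective {α β γ : Type*} {e : α → β × γ} (he : Injective e)
    (f : β → ℝ≥0∞) (g : γ → ℝ≥0∞) :
    ∑' a, f (e a).1 * g (e a).2 ≤ (∑' b, f b) * ∑' c, g c := by
  calc ∑' a, f (e a).1 * g (e a).2 ≤ ∑' x : β × γ, f x.1 * g x.2 :=
        tsum_comp_le_tsum_of_injective he fun x => f x.1 * g x.2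
    _ = (∑' b, f b) * ∑' c, g c := tsum_prod_mul f g

theorem tsum_tsum_mul_mul_sub_sub {G : Type*} [AddCommGroup G] (f g h : G → ℝ≥0∞) :
    ∑' k, ∑' p : G × G, f p.1 * g p.2 * h (k - p.1 - p.2) =
      (∑' i, f i) * (∑' i, g i) * ∑' i, h i := by
  have shift (p : G × G) : ∑' k, h (k - p.1 - p.2) = ∑' i, h i := by
    simp_rw [sub_sub]
    exact (Equiv.subRight (p.1 + p.2)).tsum_eq h
  rw [ENNReal.tsum_comm]
  simp only [ENNReal.tsum_mul_left, shift, ENNReal.tsum_mul_right, tsum_prod_mul]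

end ENNReal

open Real

lemma add_sq_mul_inv_sq_mul_inv_sq_le (a b : ℝ) :
    (a + b) ^ 2 * (a ^ 2)⁻¹ * (b ^ 2)⁻¹ ≤ 2 * ((a ^ 2)⁻¹ + (b ^ 2)⁻¹) :=
  calc (a + b) ^ 2 * (a ^ 2)⁻¹ * (b ^ 2)⁻¹ ≤ 2 * (a ^ 2 + b ^ 2) * (a ^ 2)⁻¹ * (b ^ 2)⁻¹ := by
        gcongr; nlinarith [sq_nonneg (a - b)]
    _ = 2 * (a ^ 2 * (a ^ 2)⁻¹) * (b ^ 2)⁻¹ + 2 * (b ^ 2 * (b ^ 2)⁻¹) * (a ^ 2)⁻¹ := by ring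
    _ ≤ 2 * 1 * (b ^ 2)⁻¹ + 2 * 1 * (a ^ 2)⁻¹ := by gcongr <;> exact mul_inv_le_one
    _ = 2 * ((a ^ 2)⁻¹ + (b ^ 2)⁻¹) := by ring

lemma add_add_sq_mul_inv_sq_mul_inv_sq_mul_inv_sq_le (a b c : ℝ) :
    (a + b + c) ^ 2 * (a ^ 2)⁻¹ * (b ^ 2)⁻¹ * (c ^ 2)⁻¹ ≤
      3 * ((b ^ 2)⁻¹ * (c ^ 2)⁻¹ + (a ^ 2)⁻¹ * (c ^ 2)⁻¹ + (a ^ 2)⁻¹ * (b ^ 2)⁻¹) :=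
  calc (a + b + c) ^ 2 * (a ^ 2)⁻¹ * (b ^ 2)⁻¹ * (c ^ 2)⁻¹
        ≤ 3 * (a ^ 2 + b ^ 2 + c ^ 2) * (a ^ 2)⁻¹ * (b ^ 2)⁻¹ * (c ^ 2)⁻¹ := by
        gcongr; nlinarith [sq_nonneg (a - b), sq_nonneg (b - c), sq_nonneg (a - c)]
    _ = 3 * (a ^ 2 * (a ^ 2)⁻¹) * ((b ^ 2)⁻¹ * (c ^ 2)⁻¹) +
          3 * (b ^ 2 * (b ^ 2)⁻¹) * ((a ^ 2)⁻¹ * (c ^ 2)⁻¹) +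
          3 * (c ^ 2 * (c ^ 2)⁻¹) * ((a ^ 2)⁻¹ * (b ^ 2)⁻¹) := by ring
    _ ≤ 3 * 1 * ((b ^ 2)⁻¹ * (c ^ 2)⁻¹) + 3 * 1 * ((a ^ 2)⁻¹ * (c ^ 2)⁻¹) +
          3 * 1 * ((a ^ 2)⁻¹ * (b ^ 2)⁻¹) := by gcongr <;> exact mul_inv_le_one
    _ = 3 * ((b ^ 2)⁻¹ * (c ^ 2)⁻¹ + (a ^ 2)⁻¹ * (c ^ 2)⁻¹ + (a ^ 2)⁻¹ * (b ^ 2)⁻¹) := by ring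

/-- `1 / n²`, equal to `0` at `n = 0` because `0⁻¹ = 0` in `ℝ`. -/
def invSq (n : ℤ) : ℝ≥0∞ := ENNReal.ofReal ((n : ℝ) ^ 2)⁻¹

lemma invSq_neg (n : ℤ) : invSq (-n) = invSq n := by simp [invSq]

lemma tsum_invSq : ∑' n : ℤ, invSq n = ENNReal.ofReal (π ^ 2 / 3) := by
  have hnat : ∑' n : ℕ, invSq n = ENNReal.ofReal (π ^ 2 / 6) := by
    simp only [invSq, Int.cast_natCast, ← one_div]
    rw [← ENNReal.ofReal_tsum_of_nonneg (fun n => by positivity) hasSum_zeta_two.summable,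
      hasSum_zeta_two.tsum_eq]
  have h := tsum_nat_add_neg (f := invSq) ENNReal.summable
  simp only [invSq_neg, ← two_mul, ENNReal.tsum_mul_left, hnat] at h
  rw [show invSq 0 = 0 by simp [invSq], add_zero] at h
  rw [← h, ← ENNReal.ofReal_ofNat 2, ← ENNReal.ofReal_mul zero_le_two]
  congr 1
  ring

lemma tsum_invSq_mul_invSq_le {f g : ℤ × ℤ → ℤ} (h : Injective fun p => (f p, g p)) :
    ∑' p, invSq (f p) * invSq (g p) ≤ ENNReal.ofReal (π ^ 2 / 3) ^ 2 := by
  rw [sq, ← tsum_invSq]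
  exact ENNReal.tsum_mul_comp_le_of_injective h invSq invSq

lemma ofReal_sq_mul_invSq_mul_invSq_le {x a b : ℤ} (h : x = a + b) :
    ENNReal.ofReal ((x : ℝ) ^ 2) * invSq a * invSq b ≤ 2 * (invSq a + invSq b) := by
  have key := add_sq_mul_inv_sq_mul_inv_sq_le a b
  rw [← Int.cast_add, ← h] at key
  simp only [invSq]
  rw [← ENNReal.ofReal_mul (by positivity), ← ENNReal.ofReal_mul (by positivity),
    ← ENNReal.ofReal_add (by positivity) (by positivity), ← ENNReal.ofReal_ofNat 2,
    ← ENNReal.ofReal_mul zero_le_two]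
  exact ENNReal.ofReal_le_ofReal key

lemma ofReal_sq_mul_invSq_mul_invSq_mul_invSq_le {x a b c : ℤ} (h : x = a + b + c) :
    ENNReal.ofReal ((x : ℝ) ^ 2) * invSq a * invSq b * invSq c ≤
      3 * (invSq b * invSq c + invSq a * invSq c + invSq a * invSq b) := by
  have key := add_add_sq_mul_inv_sq_mul_inv_sq_mul_inv_sq_le a b c
  rw [← Int.cast_add, ← Int.cast_add, ← h] at key
  simp (disch := positivity) only [invSq, ← ENNReal.ofReal_mul, ← ENNReal.ofReal_add,
    ← ENNReal.ofReal_ofNat 3]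
  exact ENNReal.ofReal_le_ofReal key

/-- `|k|²` times the modulus of the multiplier of `B₃` at `(k₁, k₂) = p`, written with
`k₂ + k₃ = k - k₁` and `k₁ + k₃ = k - k₂`; it vanishes when a denominator does. -/
def b3Kernel (k : ℤ) (p : ℤ × ℤ) : ℝ :=
  (k : ℝ) ^ 2 / |((p.1 * (p.1 + p.2) * (k - p.1) * (k - p.2) : ℤ) : ℝ)|

lemma b3Kernel_nonneg (k : ℤ) (p : ℤ × ℤ) : 0 ≤ b3Kernel k p := by
  unfold b3Kernel; positivity

lemma ofReal_b3Kernel_sq (k : ℤ) (p : ℤ × ℤ) :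
    ENNReal.ofReal (b3Kernel k p) ^ 2 =
      ENNReal.ofReal ((k : ℝ) ^ 2) * ENNReal.ofReal ((k : ℝ) ^ 2) *
        invSq p.1 * invSq (p.1 + p.2) * invSq (k - p.1) * invSq (k - p.2) := by
  have h : b3Kernel k p ^ 2 = (k : ℝ) ^ 2 * (k : ℝ) ^ 2 * (((p.1 : ℤ) : ℝ) ^ 2)⁻¹ *
      (((p.1 + p.2 : ℤ) : ℝ) ^ 2)⁻¹ * (((k - p.1 : ℤ) : ℝ) ^ 2)⁻¹ *
      (((k - p.2 : ℤ) : ℝ) ^ 2)⁻¹ := by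
    rw [b3Kernel, div_pow, sq_abs]
    simp only [Int.cast_mul, mul_pow]
    ring
  rw [← ENNReal.ofReal_pow (b3Kernel_nonneg k p), h]
  simp (disch := positivity) only [invSq, ← ENNReal.ofReal_mul]

lemma ofReal_b3Kernel_sq_le (k : ℤ) (p : ℤ × ℤ) :
    ENNReal.ofReal (b3Kernel k p) ^ 2 ≤
      6 * (invSq (k - p.2) * invSq p.1 + invSq (p.1 + p.2) * invSq p.1 +
          invSq (p.1 + p.2) * invSq (k - p.2) + invSq (k - p.1) * invSq (k - p.2) +
          invSq (p.1 + p.2) * invSq (k - p.2) + invSq (p.1 + p.2) * invSq (k - p.1)) := by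
  set K := ENNReal.ofReal ((k : ℝ) ^ 2)
  have hAC := ofReal_sq_mul_invSq_mul_invSq_le (x := k) (a := p.1) (b := k - p.1) (by ring)
  have hABD := ofReal_sq_mul_invSq_mul_invSq_mul_invSq_le (x := k) (a := p.1 + p.2)
    (b := k - p.2) (c := -p.1) (by ring)
  have hBCD := ofReal_sq_mul_invSq_mul_invSq_mul_invSq_le (x := 2 * k) (a := p.1 + p.2)
    (b := k - p.1) (c := k - p.2) (by ring)
  rw [invSq_neg] at hABD
  have hK : K ≤ ENNReal.ofReal (((2 * k : ℤ) : ℝ) ^ 2) :=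
    ENNReal.ofReal_le_ofReal (by push_cast; nlinarith [sq_nonneg (k : ℝ)])
  calc ENNReal.ofReal (b3Kernel k p) ^ 2
      = (K * invSq p.1 * invSq (k - p.1)) * (K * invSq (p.1 + p.2) * invSq (k - p.2)) := by
        rw [ofReal_b3Kernel_sq]; ring
    _ ≤ 2 * (invSq p.1 + invSq (k - p.1)) * (K * invSq (p.1 + p.2) * invSq (k - p.2)) := by
        gcongr
    _ = 2 * (K * invSq (p.1 + p.2) * invSq (k - p.2) * invSq p.1 +
          K * invSq (p.1 + p.2) * invSq (k - p.1) * invSq (k - p.2)) := by ring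
    _ ≤ 2 * (3 * (invSq (k - p.2) * invSq p.1 + invSq (p.1 + p.2) * invSq p.1 +
            invSq (p.1 + p.2) * invSq (k - p.2)) +
          3 * (invSq (k - p.1) * invSq (k - p.2) + invSq (p.1 + p.2) * invSq (k - p.2) +
            invSq (p.1 + p.2) * invSq (k - p.1))) := by
        have hKBCD : K * invSq (p.1 + p.2) * invSq (k - p.1) * invSq (k - p.2) ≤ _ :=
          le_trans (by gcongr) hBCD
        gcongr
    _ = _ := by ring

lemma tsum_ofReal_b3Kernel_sq_le (k : ℤ) :
    ∑' p, ENNReal.ofReal (b3Kernel k p) ^ 2 ≤ ENNReal.ofReal (4 * π ^ 4) := by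
  set Z := ENNReal.ofReal (π ^ 2 / 3) ^ 2 with hZ
  calc ∑' p, ENNReal.ofReal (b3Kernel k p) ^ 2
      ≤ ∑' p : ℤ × ℤ, 6 * (invSq (k - p.2) * invSq p.1 + invSq (p.1 + p.2) * invSq p.1 +
          invSq (p.1 + p.2) * invSq (k - p.2) + invSq (k - p.1) * invSq (k - p.2) +
          invSq (p.1 + p.2) * invSq (k - p.2) + invSq (p.1 + p.2) * invSq (k - p.1)) :=
        ENNReal.tsum_le_tsum (ofReal_b3Kernel_sq_le k)
    _ ≤ 6 * (Z + Z + Z + Z + Z + Z) := by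
        simp only [ENNReal.tsum_mul_left, ENNReal.tsum_add]
        gcongr
        all_goals refine tsum_invSq_mul_invSq_le fun p q h => ?_
        all_goals simp only [Prod.mk.injEq] at h; ext <;> omega
    _ = ENNReal.ofReal (4 * π ^ 4) := by
        rw [hZ, ← ENNReal.ofReal_pow (by positivity)]
        simp (disch := positivity) only [← ENNReal.ofReal_ofNat, ← ENNReal.ofReal_mul,
          ← ENNReal.ofReal_add]
        congr 1
        ring

lemma wt_mul_sq_nonneg (s : ℝ) (k : ℤ) (z : ℂ) : 0 ≤ wt s k * ‖z‖ ^ 2 := by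
  unfold wt; positivity

def weightedCoeff (s : ℝ) (u : ℤ → ℂ) (j : ℤ) : ℝ := if j = 0 then 0 else |(j : ℝ)| ^ s * ‖u j‖

lemma weightedCoeff_nonneg (s : ℝ) (u : ℤ → ℂ) (j : ℤ) : 0 ≤ weightedCoeff s u j := by
  unfold weightedCoeff
  split_ifs <;> positivity

lemma weightedCoeff_sq (s : ℝ) (u : ℤ → ℂ) {j : ℤ} (hj : j ≠ 0) :
    weightedCoeff s u j ^ 2 = wt s j * ‖u j‖ ^ 2 := by
  rw [weightedCoeff, if_neg hj, mul_pow, wt, Int.cast_abs, mul_comm 2 s,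
    Real.rpow_mul (abs_nonneg _), Real.rpow_two]

lemma tsum_ofReal_wt_eq (s : ℝ) (u : ℤ → ℂ) :
    ∑' k : {k : ℤ // k ≠ 0}, ENNReal.ofReal (wt s k * ‖u k‖ ^ 2) =
      ∑' j, ENNReal.ofReal (weightedCoeff s u j) ^ 2 := by
  rw [← tsum_subtype_eq_of_support_subset (s := {j : ℤ | j ≠ 0})]
  · exact tsum_congr fun k => by
      rw [← ENNReal.ofReal_pow (weightedCoeff_nonneg s u k), weightedCoeff_sq s u k.2]
  · intro j hj hj0
    simp [weightedCoeff, hj0] at hj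

lemma ofReal_hnorm_sq {s : ℝ} {u : ℤ → ℂ} (hu : memH s u) :
    ENNReal.ofReal (hnorm s u ^ 2) = ∑' j, ENNReal.ofReal (weightedCoeff s u j) ^ 2 := by
  have hnonneg (k : {k : ℤ // k ≠ 0}) := wt_mul_sq_nonneg s k (u k)
  rw [hnorm, Real.sq_sqrt (tsum_nonneg hnonneg), ENNReal.ofReal_tsum_of_nonneg hnonneg hu,
    tsum_ofReal_wt_eq]

lemma hnorm_nonneg (s : ℝ) (u : ℤ → ℂ) : 0 ≤ hnorm s u := Real.sqrt_nonneg _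

lemma memH_and_hnorm_le {s C : ℝ} {u : ℤ → ℂ} (hC : 0 ≤ C)
    (h : ∑' j, ENNReal.ofReal (weightedCoeff s u j) ^ 2 ≤ ENNReal.ofReal (C ^ 2)) :
    memH s u ∧ hnorm s u ≤ C := by
  have hnonneg (k : {k : ℤ // k ≠ 0}) := wt_mul_sq_nonneg s k (u k)
  rw [← tsum_ofReal_wt_eq] at h
  have hu : memH s u :=
    (ENNReal.summable_toReal (ne_top_of_le_ne_top ENNReal.ofReal_ne_top h)).congr
      fun k => ENNReal.toReal_ofReal (hnonneg k)
  rw [← ENNReal.ofReal_tsum_of_nonneg hnonneg hu, ENNReal.ofReal_le_ofReal_iff (by positivity)] at h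
  exact ⟨hu, Real.sqrt_le_iff.mpr ⟨hC, h⟩⟩

lemma norm_osc3 (t : ℝ) (a b c : ℤ) : ‖osc3 t a b c‖ = 1 := by
  rw [osc3, show 3 * Complex.I * ((a + b : ℤ) : ℂ) * ((b + c : ℤ) : ℂ) * ((a + c : ℤ) : ℂ) * t =
      ((3 * ((a + b : ℤ) : ℝ) * ((b + c : ℤ) : ℝ) * ((a + c : ℤ) : ℝ) * t : ℝ) : ℂ) * Complex.I by
    push_cast; ring]
  exact Complex.norm_exp_ofReal_mul_I _

lemma abs_add_add_rpow_le {s : ℝ} (hs : 0 ≤ s) {a b c : ℤ} (ha : a ≠ 0) (hb : b ≠ 0) (hc : c ≠ 0) :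
    |((a + b + c : ℤ) : ℝ)| ^ s ≤ 3 ^ s * (|(a : ℝ)| ^ s * |(b : ℝ)| ^ s * |(c : ℝ)| ^ s) := by
  have one_le {n : ℤ} (hn : n ≠ 0) : 1 ≤ |(n : ℝ)| := by
    rw [← Int.cast_abs]; exact_mod_cast Int.one_le_abs hn
  have h1 := one_le ha
  have h2 := one_le hb
  have h3 := one_le hc
  have key : |((a + b + c : ℤ) : ℝ)| ≤ 3 * (|(a : ℝ)| * |(b : ℝ)| * |(c : ℝ)|) := by
    push_cast
    refine (abs_add_three _ _ _).trans ?_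
    nlinarith [mul_le_mul h1 h2 zero_le_one (by positivity), mul_nonneg (abs_nonneg (a : ℝ))
      (abs_nonneg (b : ℝ))]
  rw [← Real.mul_rpow (abs_nonneg _) (abs_nonneg _), ← Real.mul_rpow (by positivity) (abs_nonneg _),
    ← Real.mul_rpow (by positivity) (by positivity)]
  exact Real.rpow_le_rpow (abs_nonneg _) key hs

def b3Summand (t : ℝ) (φ ψ ξ : ℤ → ℂ) (k : ℤ) (p : ℤ × ℤ) : ℂ :=
  if p.1 ≠ 0 ∧ p.2 ≠ 0 ∧ k - p.1 - p.2 ≠ 0 ∧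
      (p.1 + p.2) * (p.2 + (k - p.1 - p.2)) * (p.1 + (k - p.1 - p.2)) ≠ 0 then
    osc3 t p.1 p.2 (k - p.1 - p.2) * φ p.1 * ψ p.2 * ξ (k - p.1 - p.2) /
      ((p.1 : ℂ) * ((p.1 + p.2 : ℤ) : ℂ) * ((p.2 + (k - p.1 - p.2) : ℤ) : ℂ) *
        ((p.1 + (k - p.1 - p.2) : ℤ) : ℂ))
  else 0

lemma B3_apply (t : ℝ) (φ ψ ξ : ℤ → ℂ) (k : ℤ) :
    B3 t φ ψ ξ k = ∑' p, b3Summand t φ ψ ξ k p := rfl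

lemma rpow_mul_norm_b3Summand_le {s : ℝ} (hs : 0 ≤ s) (t : ℝ) (φ ψ ξ : ℤ → ℂ) (k : ℤ)
    (p : ℤ × ℤ) :
    |(k : ℝ)| ^ (s + 2) * ‖b3Summand t φ ψ ξ k p‖ ≤
      3 ^ s * b3Kernel k p *
        (weightedCoeff s φ p.1 * weightedCoeff s ψ p.2 * weightedCoeff s ξ (k - p.1 - p.2)) := by
  unfold b3Summand
  split_ifs with h
  · obtain ⟨h1, h2, h3, -⟩ := h
    set k3 := k - p.1 - p.2
    have hk : k = p.1 + p.2 + k3 := by omega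
    simp only [weightedCoeff, if_neg h1, if_neg h2, if_neg h3]
    have hden : ‖(p.1 : ℂ) * ((p.1 + p.2 : ℤ) : ℂ) * ((p.2 + k3 : ℤ) : ℂ) * ((p.1 + k3 : ℤ) : ℂ)‖ =
        |((p.1 * (p.1 + p.2) * (k - p.1) * (k - p.2) : ℤ) : ℝ)| := by
      rw [show p.2 + k3 = k - p.1 by omega, show p.1 + k3 = k - p.2 by omega,
        ← Complex.norm_intCast]
      push_cast
      rfl
    have hweight := abs_add_add_rpow_le hs h1 h2 h3
    rw [← hk] at hweight
    rw [norm_div, norm_mul, norm_mul, norm_mul, norm_osc3, one_mul, hden,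
      Real.rpow_add' (abs_nonneg _) (by linarith), Real.rpow_two, sq_abs]
    calc |(k : ℝ)| ^ s * (k : ℝ) ^ 2 *
          (‖φ p.1‖ * ‖ψ p.2‖ * ‖ξ k3‖ / |((p.1 * (p.1 + p.2) * (k - p.1) * (k - p.2) : ℤ) : ℝ)|)
        = |(k : ℝ)| ^ s * (b3Kernel k p * (‖φ p.1‖ * ‖ψ p.2‖ * ‖ξ k3‖)) := by
          rw [b3Kernel]; ring
      _ ≤ 3 ^ s * (|(p.1 : ℝ)| ^ s * |(p.2 : ℝ)| ^ s * |(k3 : ℝ)| ^ s) *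
            (b3Kernel k p * (‖φ p.1‖ * ‖ψ p.2‖ * ‖ξ k3‖)) := by
          have := b3Kernel_nonneg k p
          gcongr
      _ = _ := by ring
  · rw [norm_zero, mul_zero]
    have := b3Kernel_nonneg k p
    have := weightedCoeff_nonneg s φ p.1
    have := weightedCoeff_nonneg s ψ p.2
    have := weightedCoeff_nonneg s ξ (k - p.1 - p.2)
    positivity

lemma ofReal_weightedCoeff_B3_le {s : ℝ} (hs : 0 ≤ s) (t : ℝ) (φ ψ ξ : ℤ → ℂ) (k : ℤ) :
    ENNReal.ofReal (weightedCoeff (s + 2) (B3 t φ ψ ξ) k) ≤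
      ENNReal.ofReal (3 ^ s) * ∑' p, ENNReal.ofReal (b3Kernel k p) *
        (ENNReal.ofReal (weightedCoeff s φ p.1) * ENNReal.ofReal (weightedCoeff s ψ p.2) *
          ENNReal.ofReal (weightedCoeff s ξ (k - p.1 - p.2))) := by
  rw [weightedCoeff]
  split_ifs with hk
  · simp
  have hw : 0 ≤ |(k : ℝ)| ^ (s + 2) := by positivity
  calc ENNReal.ofReal (|(k : ℝ)| ^ (s + 2) * ‖B3 t φ ψ ξ k‖)
      = ENNReal.ofReal (|(k : ℝ)| ^ (s + 2)) * ‖∑' p, b3Summand t φ ψ ξ k p‖ₑ := by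
        rw [ENNReal.ofReal_mul hw, ofReal_norm, B3_apply]
    _ ≤ ∑' p, ENNReal.ofReal (|(k : ℝ)| ^ (s + 2) * ‖b3Summand t φ ψ ξ k p‖) := by
        simp only [ENNReal.ofReal_mul hw, ofReal_norm, ENNReal.tsum_mul_left]
        gcongr
        exact enorm_tsum_le_tsum_enorm
    _ ≤ ∑' p, ENNReal.ofReal (3 ^ s * b3Kernel k p *
          (weightedCoeff s φ p.1 * weightedCoeff s ψ p.2 * weightedCoeff s ξ (k - p.1 - p.2))) :=
        ENNReal.tsum_le_tsum fun p =>
          ENNReal.ofReal_le_ofReal (rpow_mul_norm_b3Summand_le hs t φ ψ ξ k p)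
    _ = _ := by
        rw [← ENNReal.tsum_mul_left]
        refine tsum_congr fun p => ?_
        have := b3Kernel_nonneg k p
        have := weightedCoeff_nonneg s φ p.1
        have := weightedCoeff_nonneg s ψ p.2
        have := weightedCoeff_nonneg s ξ (k - p.1 - p.2)
        simp (disch := positivity) only [ENNReal.ofReal_mul, mul_assoc]

lemma tsum_ofReal_weightedCoeff_B3_sq_le {s : ℝ} (hs : 0 ≤ s) (t : ℝ) (φ ψ ξ : ℤ → ℂ) :
    ∑' k, ENNReal.ofReal (weightedCoeff (s + 2) (B3 t φ ψ ξ) k) ^ 2 ≤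
      ENNReal.ofReal (3 ^ s) ^ 2 * ENNReal.ofReal (4 * π ^ 4) *
        ((∑' j, ENNReal.ofReal (weightedCoeff s φ j) ^ 2) *
          (∑' j, ENNReal.ofReal (weightedCoeff s ψ j) ^ 2) *
          ∑' j, ENNReal.ofReal (weightedCoeff s ξ j) ^ 2) := by
  set F := fun j => ENNReal.ofReal (weightedCoeff s φ j)
  set G := fun j => ENNReal.ofReal (weightedCoeff s ψ j)
  set H := fun j => ENNReal.ofReal (weightedCoeff s ξ j)
  have hmode (k : ℤ) : ENNReal.ofReal (weightedCoeff (s + 2) (B3 t φ ψ ξ) k) ^ 2 ≤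
      ENNReal.ofReal (3 ^ s) ^ 2 * ENNReal.ofReal (4 * π ^ 4) *
        ∑' p : ℤ × ℤ, F p.1 ^ 2 * G p.2 ^ 2 * H (k - p.1 - p.2) ^ 2 := by
    calc ENNReal.ofReal (weightedCoeff (s + 2) (B3 t φ ψ ξ) k) ^ 2
        ≤ (ENNReal.ofReal (3 ^ s) *
            ∑' p, ENNReal.ofReal (b3Kernel k p) * (F p.1 * G p.2 * H (k - p.1 - p.2))) ^ 2 := by
          gcongr
          exact ofReal_weightedCoeff_B3_le hs t φ ψ ξ k
      _ ≤ ENNReal.ofReal (3 ^ s) ^ 2 * ((∑' p, ENNReal.ofReal (b3Kernel k p) ^ 2) *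
            ∑' p : ℤ × ℤ, (F p.1 * G p.2 * H (k - p.1 - p.2)) ^ 2) := by
          rw [mul_pow]
          gcongr
          exact ENNReal.tsum_mul_sq_le _ _
      _ ≤ ENNReal.ofReal (3 ^ s) ^ 2 * (ENNReal.ofReal (4 * π ^ 4) *
            ∑' p : ℤ × ℤ, (F p.1 * G p.2 * H (k - p.1 - p.2)) ^ 2) := by
          gcongr
          exact tsum_ofReal_b3Kernel_sq_le k
      _ = _ := by simp only [mul_pow, mul_assoc]
  calc ∑' k, ENNReal.ofReal (weightedCoeff (s + 2) (B3 t φ ψ ξ) k) ^ 2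
      ≤ ∑' k, ENNReal.ofReal (3 ^ s) ^ 2 * ENNReal.ofReal (4 * π ^ 4) *
          ∑' p : ℤ × ℤ, F p.1 ^ 2 * G p.2 ^ 2 * H (k - p.1 - p.2) ^ 2 :=
        ENNReal.tsum_le_tsum hmode
    _ = _ := by
        rw [ENNReal.tsum_mul_left,
          ENNReal.tsum_tsum_mul_mul_sub_sub (fun j => F j ^ 2) (fun j => G j ^ 2) fun j => H j ^ 2]

/-- Smoothing property of `B₃`. -/
theorem b3_smoothing (s : ℝ) (hs : 0 ≤ s) :
    ∃ C : ℝ, ∀ t : ℝ, ∀ φ ψ ξ : ℤ → ℂ, memH s φ → memH s ψ → memH s ξ →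
      memH (s + 2) (B3 t φ ψ ξ) ∧
      hnorm (s + 2) (B3 t φ ψ ξ) ≤ C * hnorm s φ * hnorm s ψ * hnorm s ξ := by
  refine ⟨2 * π ^ 2 * 3 ^ s, fun t φ ψ ξ hφ hψ hξ => ?_⟩
  have := hnorm_nonneg s φ
  have := hnorm_nonneg s ψ
  have := hnorm_nonneg s ξ
  refine memH_and_hnorm_le (by positivity)
    ((tsum_ofReal_weightedCoeff_B3_sq_le hs t φ ψ ξ).trans_eq ?_)
  rw [← ofReal_hnorm_sq hφ, ← ofReal_hnorm_sq hψ, ← ofReal_hnorm_sq hξ,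
    ← ENNReal.ofReal_pow (by positivity)]
  simp (disch := positivity) only [← ENNReal.ofReal_mul]
  congr 1
  ring
end
end
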